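/- arXiv:1012.0175 — 7 statements merged into one kernel-verified Lean document; each statement's English description precedes it below -/
import Mathlib

section
/- For every integer j ≥ 0, the identity (t/(e^t − 1))^{j+1} · h_j(e^t − 1) = j!·(1 + (−1)^j · ∑_{n ≥ j+1} binom(n−1, j) · B_n · t^n / n!) holds in ℚ[[t]]; equivalently, in denominator-free form, (e^t − 1)^{j+1} · j!·(1 + (−1)^j ∑_{n ≥ j+1} binom(n−1,j) B_n t^n/n!) = t^{j+1} · h_j(e^t − 1). -/
/-!
Write `E = e^t - 1`, so that `E' = 1 + E`, and `F_j` for the right-hand side. Both sides obey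
the same first-order recursion in `j`: coefficientwise, `(j+1)·C(n,j+1) = (n-j)·C(n,j)` gives
`F_{j+1} = (j+1) F_j - t F_j'`, while the chain rule turns the recursion defining `h_{j+1}` into
`h_{j+1}(E) = (j+1)(1+E) h_j(E) - E (h_j(E))'`. Differentiating `E^{j+1} F_j = t^{j+1} h_j(E)`
and taking a linear combination with the identity itself yields the case `j+1`. The case `j = 0`
is `t/(e^t-1) · (e^t-1) = t`, the definition of the Bernoulli numbers.
-/

/-- The polynomials `h_j`, defined by `h_0 = 1` and
`h_j = (1+X) * (j * h_{j-1} - X * h_{j-1}')`. -/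
noncomputable def hPoly : ℕ → Polynomial ℤ
  | 0 => 1
  | (j + 1) => (1 + Polynomial.X) *
      ((j + 1 : ℤ) • hPoly j - Polynomial.X * Polynomial.derivative (hPoly j))

/-- The power series `j! * (1 + (-1)^j * ∑_{n ≥ j+1} binom(n-1, j) * B_n * t^n / n!)`. -/
noncomputable def bernoulliSide (j : ℕ) : PowerSeries ℚ :=
  PowerSeries.mk fun n =>
    if n = 0 then (j.factorial : ℚ)
    else if j + 1 ≤ n then
      (j.factorial : ℚ) * (-1) ^ j * ((n - 1).choose j : ℚ) * _root_.bernoulli n /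
        (n.factorial : ℚ)
    else 0

open PowerSeries

theorem Nat.cast_choose_succ_mul {R : Type*} [Ring R] (n k : ℕ) :
    (n.choose (k + 1) : R) * (k + 1) = n.choose k * (n - k) := by
  rcases le_or_gt k n with hkn | hnk
  · rw [← Nat.cast_sub hkn]
    exact_mod_cast congrArg (Nat.cast : ℕ → R) (Nat.choose_succ_right_eq n k)
  · simp [Nat.choose_eq_zero_of_lt hnk, Nat.choose_eq_zero_of_lt (Nat.lt_succ_of_lt hnk)]

theorem Derivation.pow_succ_mul_eq_of_pow_mul_eq {R A : Type*} [CommRing R] [CommRing A]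
    [Algebra R A] (D : Derivation R A A) {x e F P : A} (n : ℕ) (hx : D x = 1)
    (he : D e = 1 + e) (h : e ^ (n + 1) * F = x ^ (n + 1) * P) :
    e ^ (n + 2) * ((n + 1) * F - x * D F) =
      x ^ (n + 2) * ((n + 1) * (1 + e) * P - e * D P) := by
  have hD : (n + 1) * e ^ n * (1 + e) * F + e ^ (n + 1) * D F =
      (n + 1) * x ^ n * P + x ^ (n + 1) * D P := by
    simpa [Derivation.leibniz, Derivation.leibniz_pow, hx, he, mul_comm, mul_left_comm,
      mul_assoc, add_comm] using congrArg D h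
  linear_combination (↑n + 1) * (e + x * (1 + e)) * h - x * e * hD

theorem aeval_hPoly_succ {A : Type*} [CommRing A] [Algebra ℤ A]
    (D : Derivation ℤ A A) {e : A} (he : D e = 1 + e) (j : ℕ) :
    Polynomial.aeval e (hPoly (j + 1)) =
      (j + 1) * (1 + e) * Polynomial.aeval e (hPoly j) - e * D (Polynomial.aeval e (hPoly j)) := by
  rw [D.map_aeval, he, smul_eq_mul, hPoly]
  simp only [map_mul, map_sub, map_add, map_one, Polynomial.aeval_X, zsmul_eq_mul, map_intCast]
  push_cast
  ring

theorem coeff_succ_bernoulliSide (j n : ℕ) :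
    coeff (n + 1) (bernoulliSide j) =
      j.factorial * (-1) ^ j * n.choose j * bernoulli (n + 1) / (n + 1).factorial := by
  rw [bernoulliSide, coeff_mk, if_neg n.succ_ne_zero, Nat.add_sub_cancel]
  split_ifs with hjn
  · rfl
  · rw [Nat.choose_eq_zero_of_lt (by omega)]
    simp

theorem bernoulliSide_zero : bernoulliSide 0 = bernoulliPowerSeries ℚ := by
  ext (_ | n)
  · simp [bernoulliSide, bernoulliPowerSeries]
  · simp [coeff_succ_bernoulliSide, bernoulliPowerSeries, div_eq_mul_inv]

theorem bernoulliSide_succ (j : ℕ) :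
    bernoulliSide (j + 1) =
      ((j : ℚ⟦X⟧) + 1) * bernoulliSide j - X * derivative ℚ (bernoulliSide j) := by
  rw [show (j : ℚ⟦X⟧) + 1 = C ((j : ℚ) + 1) by simp]
  ext (_ | n)
  · simp [bernoulliSide, Nat.factorial_succ]
  · rw [map_sub, coeff_succ_X_mul, coeff_derivative, coeff_C_mul,
      coeff_succ_bernoulliSide, coeff_succ_bernoulliSide, Nat.factorial_succ j]
    push_cast
    linear_combination
      (j.factorial * (-1) ^ (j + 1) * bernoulli (n + 1) / (n + 1).factorial : ℚ) *
        Nat.cast_choose_succ_mul (R := ℚ) n j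

/-- `(t/(e^t-1))^{j+1} h_j(e^t-1) = j!(1 + (-1)^j ∑_{n ≥ j+1} binom(n-1,j) B_n t^n/n!)`,
in the denominator-free form
`(e^t-1)^{j+1} * j!(1 + ⋯) = t^{j+1} * h_j(e^t-1)`. -/
theorem bernoulli_identity (j : ℕ) :
    (PowerSeries.exp ℚ - 1) ^ (j + 1) * bernoulliSide j =
      (PowerSeries.X : PowerSeries ℚ) ^ (j + 1) *
        Polynomial.aeval (PowerSeries.exp ℚ - 1) (hPoly j) := by
  have hE : derivative ℚ (exp ℚ - 1) = 1 + (exp ℚ - 1) := by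
    rw [map_sub, derivative_exp, Derivation.map_one_eq_zero]
    ring
  induction j with
  | zero =>
    rw [bernoulliSide_zero, pow_one, pow_one, mul_comm, bernoulliPowerSeries_mul_exp_sub_one]
    simp [hPoly]
  | succ j ih =>
    rw [bernoulliSide_succ, aeval_hPoly_succ ((derivative ℚ).restrictScalars ℤ) hE]
    exact (derivative ℚ).pow_succ_mul_eq_of_pow_mul_eq j derivative_X hE ih
end

section
/- For every integer j ≥ 1, letting D_j denote the ℚ-linear operator −t·(d/dt) + j on ℚ[[t]], one has D_j[ (t/(e^t − 1))^j · h_{j−1}(e^t − 1) ] = (t/(e^t − 1))^{j+1} · h_j(e^t − 1) in ℚ[[t]]. -/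
/-- The operator `D_j = -t (d/dt) + j`, sending `∑ cₙ tⁿ` to `∑ (j - n) cₙ tⁿ`. -/
noncomputable def Dop (j : ℕ) (f : PowerSeries ℚ) : PowerSeries ℚ :=
  PowerSeries.mk fun n => ((j : ℚ) - (n : ℚ)) * PowerSeries.coeff n f

open PowerSeries
open Polynomial (aeval)

lemma Dop_eq (j : ℕ) (f : ℚ⟦X⟧) : Dop j f = (j : ℚ⟦X⟧) * f - X * d⁄dX ℚ f := by
  ext n
  rw [Dop, coeff_mk, map_sub, ← map_natCast (C (R := ℚ)) j, coeff_C_mul]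
  cases n with
  | zero => simp
  | succ n =>
    rw [coeff_succ_X_mul, coeff_derivative]
    push_cast
    ring

lemma aeval_hPoly_succ_s2 {A : Type*} [CommRing A] [Algebra ℤ A] (x : A) (k : ℕ) :
    aeval x (hPoly (k + 1)) =
      (1 + x) * ((k + 1) * aeval x (hPoly k) - x * aeval x (Polynomial.derivative (hPoly k))) := by
  simp [hPoly]

theorem natCast_mul_sub_mul_derivation_pow_mul_aeval {R A : Type*} [CommRing R] [CommRing A]
    [Algebra R A] (d : Derivation R A A) {t T E : A} (k : ℕ) (p : Polynomial R)
    (hT : T * E = t) (ht : d t = 1) (hE : d E = E + 1) :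
    (k + 1) * (T ^ (k + 1) * aeval E p) - t * d (T ^ (k + 1) * aeval E p) =
      T ^ (k + 2) * ((1 + E) * ((k + 1) * aeval E p - E * aeval E (Polynomial.derivative p))) := by
  have hdT : d T * E + T * (E + 1) = 1 := by
    have h := congrArg d hT
    rw [d.leibniz, ht, hE, smul_eq_mul, smul_eq_mul] at h
    linear_combination h
  rw [d.leibniz, d.leibniz_pow, d.map_aeval, hE, Nat.add_sub_cancel]
  simp only [smul_eq_mul, nsmul_eq_mul]
  push_cast
  linear_combination
    (T ^ (k + 1) * (aeval E (Polynomial.derivative p) * (E + 1)) +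
        aeval E p * ((k + 1) * T ^ k * d T)) * hT -
      (k + 1) * T ^ (k + 1) * aeval E p * hdT

/-- For `j ≥ 1`, `D_j[(t/(e^t-1))^j h_{j-1}(e^t-1)] = (t/(e^t-1))^{j+1} h_j(e^t-1)`.
Here `T` denotes the power series `t/(e^t-1)`, i.e. the unique power series with
`T * (e^t - 1) = t`. -/
theorem Dop_hPoly_step (j : ℕ) (hj : 1 ≤ j) (T : PowerSeries ℚ)
    (hT : T * (PowerSeries.exp ℚ - 1) = PowerSeries.X) :
    Dop j (T ^ j * Polynomial.aeval (PowerSeries.exp ℚ - 1) (hPoly (j - 1))) =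
      T ^ (j + 1) * Polynomial.aeval (PowerSeries.exp ℚ - 1) (hPoly j) := by
  obtain ⟨k, rfl⟩ := Nat.exists_eq_add_of_le' hj
  rw [Nat.add_sub_cancel, Dop_eq, aeval_hPoly_succ_s2]
  push_cast
  exact natCast_mul_sub_mul_derivation_pow_mul_aeval
    ((d⁄dX ℚ).restrictScalars ℤ) k (hPoly k) hT derivative_X
    -- `change` strips `restrictScalars`, whose `ℤ`-module structure on `ℚ⟦X⟧` blocks `simp`
    (by change d⁄dX ℚ (exp ℚ - 1) = _; simp [derivative_exp])
end

section
/- For every integer j ≥ 1, letting D_j denote the ℚ-linear operator −t·(d/dt) + j on ℚ[[t]], one has D_j[ (j−1)!·(1 + (−1)^{j−1} ∑_{n ≥ j} binom(n−1, j−1) B_n t^n/n!) ] = j!·(1 + (−1)^j ∑_{n ≥ j+1} binom(n−1, j) B_n t^n/n!) in ℚ[[t]]. -/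
/-! The step is coefficientwise: for `n ≥ 1` it is the absorption identity
`(k + 1) · C(m, k + 1) = (m - k) · C(m, k)` with `m = n - 1`, `k = j - 1`, and the
truncation `n ≥ j + 1` in `bernoulliSide j` is automatic because `C(n - 1, j) = 0` for `n ≤ j`. -/

open PowerSeries

theorem Nat.cast_add_one_mul_choose_succ {R : Type*} [CommRing R] (m k : ℕ) :
    ((k : R) + 1) * (m.choose (k + 1) : R) = (m.choose k : R) * ((m : R) - k) := by
  rcases le_or_gt k m with hkm | hmk
  · have h := congrArg (Nat.cast (R := R)) (Nat.choose_succ_right_eq m k)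
    push_cast [Nat.cast_sub hkm] at h
    linear_combination h
  · simp [Nat.choose_eq_zero_of_lt hmk, Nat.choose_eq_zero_of_lt (hmk.trans (Nat.lt_succ_self k))]

@[simp]
theorem coeff_Dop (j n : ℕ) (f : PowerSeries ℚ) :
    coeff n (Dop j f) = ((j : ℚ) - n) * coeff n f :=
  coeff_mk _ _

@[simp]
theorem coeff_zero_bernoulliSide (j : ℕ) : coeff 0 (bernoulliSide j) = j.factorial := by
  simp [bernoulliSide]

theorem coeff_bernoulliSide_of_ne_zero (j : ℕ) {n : ℕ} (hn : n ≠ 0) :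
    coeff n (bernoulliSide j) =
      j.factorial * (-1) ^ j * ((n - 1).choose j : ℚ) * bernoulli n / n.factorial := by
  rw [bernoulliSide, coeff_mk, if_neg hn]
  split_ifs with hjn
  · rfl
  · rw [Nat.choose_eq_zero_of_lt (by omega)]
    simp

/-- For `j ≥ 1`,
`D_j[(j-1)!(1 + (-1)^{j-1} ∑_{n ≥ j} binom(n-1, j-1) Bₙ tⁿ/n!)]
  = j!(1 + (-1)^j ∑_{n ≥ j+1} binom(n-1, j) Bₙ tⁿ/n!)`. -/
theorem Dop_bernoulliSide_step (j : ℕ) (hj : 1 ≤ j) :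
    Dop j (bernoulliSide (j - 1)) = bernoulliSide j := by
  obtain ⟨k, rfl⟩ : ∃ k, j = k + 1 := ⟨j - 1, by omega⟩
  ext n
  rcases Nat.eq_zero_or_pos n with rfl | hn
  · simp [Nat.factorial_succ]
  obtain ⟨m, rfl⟩ : ∃ m, n = m + 1 := ⟨n - 1, by omega⟩
  rw [coeff_Dop, coeff_bernoulliSide_of_ne_zero _ m.add_one_ne_zero,
    coeff_bernoulliSide_of_ne_zero _ m.add_one_ne_zero]
  simp only [Nat.add_sub_cancel, Nat.factorial_succ k]
  push_cast
  linear_combination ((-1 : ℚ) ^ k * k.factorial * bernoulli (m + 1) / (m + 1).factorial) *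
    Nat.cast_add_one_mul_choose_succ (R := ℚ) m k
end

section
/- For every integer j ≥ 0, h_j is the unique monic polynomial P ∈ ℚ[X] of degree j such that the coefficients of t, t², …, t^j in the power series (t/(e^t − 1))^{j+1} · P(e^t − 1) ∈ ℚ[[t]] all vanish. -/
open Polynomial

lemma Polynomial.coeff_smul_sub_X_mul_derivative {R : Type*} [CommRing R] (a : R) (p : R[X])
    (k : ℕ) : (a • p - X * derivative p).coeff k = (a - k) * p.coeff k := by
  cases k with
  | zero => simp
  | succ k =>
    rw [coeff_sub, coeff_smul, coeff_X_mul, coeff_derivative, smul_eq_mul]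
    push_cast
    ring

lemma hPoly_succ (j : ℕ) :
    hPoly (j + 1) = (1 + X) * ((j + 1 : ℤ) • hPoly j - X * derivative (hPoly j)) := rfl

lemma hPoly_monic_and_natDegree (j : ℕ) : (hPoly j).Monic ∧ (hPoly j).natDegree = j := by
  induction j with
  | zero => exact ⟨monic_one, natDegree_one⟩
  | succ j ih =>
    obtain ⟨hmonic, hdeg⟩ := ih
    set g := (j + 1 : ℤ) • hPoly j - X * derivative (hPoly j)
    have hcoeff (k : ℕ) : g.coeff k = (j + 1 - k) * (hPoly j).coeff k :=
      coeff_smul_sub_X_mul_derivative _ _ _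
    have hg_le : g.natDegree ≤ j := natDegree_le_iff_coeff_eq_zero.2 fun k hk => by
      rw [hcoeff, coeff_eq_zero_of_natDegree_lt (by omega), mul_zero]
    have hg_lead : g.coeff j = 1 := by
      have hlead := hmonic.coeff_natDegree
      rw [hdeg] at hlead
      rw [hcoeff, hlead]
      ring
    have hg : g.Monic := monic_of_natDegree_le_of_coeff_eq_one j hg_le hg_lead
    have h1X : (1 + X : ℤ[X]).Monic := by simpa [add_comm] using monic_X_add_C (1 : ℤ)
    refine ⟨h1X.mul hg, ?_⟩
    rw [hPoly_succ, h1X.natDegree_mul hg,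
      natDegree_eq_of_le_of_coeff_ne_zero hg_le (by simp [hg_lead]), add_comm (1 : ℤ[X]),
      ← C_1, natDegree_X_add_C, add_comm]

lemma coeff_hPoly_zero (j : ℕ) : (hPoly j).coeff 0 = j.factorial := by
  induction j with
  | zero => simp [hPoly]
  | succ j ih =>
    rw [hPoly_succ, mul_coeff_zero, coeff_smul_sub_X_mul_derivative, ih]
    simp [Nat.factorial_succ]

lemma map_hPoly_succ (j : ℕ) :
    (hPoly (j + 1)).map (Int.castRingHom ℚ) = (1 + X) *
      ((j + 1) • (hPoly j).map (Int.castRingHom ℚ) -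
        X * derivative ((hPoly j).map (Int.castRingHom ℚ))) := by
  simp [hPoly_succ, derivative_map, Polynomial.map_sub]

namespace PowerSeries

variable {R : Type*} [CommRing R] {u : R⟦X⟧}

lemma coeff_mul_pow_self_of_constantCoeff_eq_zero (hu : constantCoeff u = 0) (f : R⟦X⟧)
    (m : ℕ) :
    coeff m (f * u ^ m) = constantCoeff f * coeff 1 u ^ m := by
  obtain ⟨v, rfl⟩ := X_dvd_iff.2 hu
  rw [mul_pow, mul_left_comm, coeff_X_pow_mul', if_pos le_rfl, Nat.sub_self,
    coeff_zero_eq_constantCoeff_apply, coeff_succ_X_mul, coeff_zero_eq_constantCoeff_apply]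
  simp

lemma constantCoeff_aeval (hu : constantCoeff u = 0) (Q : R[X]) :
    constantCoeff (Polynomial.aeval u Q) = Q.coeff 0 := by
  simp [Polynomial.aeval_def, Polynomial.hom_eval₂, hu, Polynomial.eval₂_at_zero]

lemma coeff_natTrailingDegree_mul_aeval (hu : constantCoeff u = 0) (f : R⟦X⟧) (Q : R[X]) :
    coeff Q.natTrailingDegree (f * Polynomial.aeval u Q) =
      constantCoeff f * coeff 1 u ^ Q.natTrailingDegree * Q.trailingCoeff := by
  set m := Q.natTrailingDegree
  obtain ⟨S, hS⟩ : Polynomial.X ^ m ∣ Q :=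
    Polynomial.X_pow_dvd_iff.2 fun d hd => coeff_eq_zero_of_lt_natTrailingDegree hd
  have hS0 : Q.trailingCoeff = S.coeff 0 := by
    show Q.coeff m = _
    rw [hS, Polynomial.coeff_X_pow_mul', if_pos le_rfl, Nat.sub_self]
  have haeval : Polynomial.aeval u Q = u ^ m * Polynomial.aeval u S := by
    rw [hS, map_mul, map_pow, Polynomial.aeval_X]
  rw [haeval, hS0, mul_left_comm, mul_comm, coeff_mul_pow_self_of_constantCoeff_eq_zero hu,
    map_mul, constantCoeff_aeval hu]
  ring

lemma eq_zero_of_coeff_mul_aeval_eq_zero [NoZeroDivisors R] (hu₀ : constantCoeff u = 0)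
    (hu₁ : coeff 1 u ≠ 0) {f : R⟦X⟧} (hf : constantCoeff f ≠ 0) {Q : R[X]} (hQ₀ : Q.coeff 0 = 0)
    (hQ : ∀ i, 1 ≤ i → i ≤ Q.natDegree → coeff i (f * Polynomial.aeval u Q) = 0) : Q = 0 := by
  by_contra hne
  have hm : 1 ≤ Q.natTrailingDegree := by
    rw [Nat.one_le_iff_ne_zero, Ne, natTrailingDegree_eq_zero]
    tauto
  have := hQ _ hm (natTrailingDegree_le_natDegree Q)
  rw [coeff_natTrailingDegree_mul_aeval hu₀] at this
  exact mul_ne_zero (mul_ne_zero hf (pow_ne_zero _ hu₁)) (mt trailingCoeff_eq_zero.1 hne) this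

lemma coeff_X_mul_derivative (f : R⟦X⟧) (i : ℕ) : coeff i (X * d⁄dX R f) = i * coeff i f := by
  cases i with
  | zero => simp
  | succ i =>
    rw [coeff_succ_X_mul, coeff_derivative]
    push_cast
    ring

end PowerSeries

open PowerSeries in
lemma X_mul_derivative_pow_mul_aeval {T : ℚ⟦X⟧} (hT : T * (exp ℚ - 1) = PowerSeries.X)
    (n : ℕ) (H : ℚ[X]) :
    PowerSeries.X * d⁄dX ℚ (T ^ n * Polynomial.aeval (exp ℚ - 1) H) =
      n • (T ^ n * Polynomial.aeval (exp ℚ - 1) H) - T ^ (n + 1) * Polynomial.aeval (exp ℚ - 1)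
        ((1 + Polynomial.X) * (n • H - Polynomial.X * derivative H)) := by
  have hu : d⁄dX ℚ (exp ℚ - 1) = 1 + (exp ℚ - 1) := by simp [derivative_exp]
  have hT' : (exp ℚ - 1) * d⁄dX ℚ T = 1 - T * (1 + (exp ℚ - 1)) := by
    have := congrArg (d⁄dX ℚ) hT
    rw [Derivation.leibniz, PowerSeries.derivative_X, hu, smul_eq_mul, smul_eq_mul] at this
    linear_combination this
  have hpow : (n : ℚ⟦X⟧) * (T ^ (n - 1) * T) = n * T ^ n := by
    cases n <;> simp [pow_succ]
  rw [← hT, Derivation.leibniz, Derivation.leibniz_pow, Derivation.map_aeval, hu]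
  simp only [map_mul, map_add, map_sub, map_one, map_natCast, Polynomial.aeval_X, smul_eq_mul,
    nsmul_eq_mul]
  linear_combination (n * T ^ n * Polynomial.aeval (exp ℚ - 1) H) * hT' +
    (Polynomial.aeval (exp ℚ - 1) H * (exp ℚ - 1) * d⁄dX ℚ T) * hpow

open PowerSeries in
lemma coeff_pow_mul_aeval_hPoly_eq_zero {T : ℚ⟦X⟧} (hT : T * (exp ℚ - 1) = PowerSeries.X)
    (j : ℕ) : ∀ i, 1 ≤ i → i ≤ j →
      coeff i (T ^ (j + 1) * Polynomial.aeval (exp ℚ - 1) ((hPoly j).map (Int.castRingHom ℚ)))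
        = 0 := by
  induction j with
  | zero => omega
  | succ j ih =>
    intro i hi₁ hij
    have hrec := X_mul_derivative_pow_mul_aeval hT (j + 1) ((hPoly j).map (Int.castRingHom ℚ))
    rw [← map_hPoly_succ, eq_sub_iff_add_eq, ← eq_sub_iff_add_eq'] at hrec
    rw [hrec, map_sub, map_nsmul, coeff_X_mul_derivative, nsmul_eq_mul]
    rcases hij.lt_or_eq with hij | rfl
    · rw [ih i hi₁ (by omega)]
      ring
    · ring

/-- `h_j` is the unique monic polynomial `P ∈ ℚ[X]` of degree `j` such that the
coefficients of `t, t², …, t^j` in `(t/(e^t-1))^{j+1} · P(e^t-1)` all vanish.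
Here `T` denotes `t/(e^t-1)`, the unique power series with `T * (e^t-1) = t`. -/
theorem hPoly_unique (j : ℕ) (T : PowerSeries ℚ)
    (hT : T * (PowerSeries.exp ℚ - 1) = PowerSeries.X) (P : Polynomial ℚ) :
    (P.Monic ∧ P.natDegree = j ∧
        ∀ i : ℕ, 1 ≤ i → i ≤ j →
          PowerSeries.coeff (R := ℚ) i (T ^ (j + 1) * Polynomial.aeval (PowerSeries.exp ℚ - 1) P) = 0)
      ↔ P = (hPoly j).map (Int.castRingHom ℚ) := by
  set h := (hPoly j).map (Int.castRingHom ℚ)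
  obtain ⟨hmonic, hdeg⟩ : h.Monic ∧ h.natDegree = j := by
    obtain ⟨hm, hd⟩ := hPoly_monic_and_natDegree j
    exact ⟨hm.map _, (hm.natDegree_map _).trans hd⟩
  have hh := coeff_pow_mul_aeval_hPoly_eq_zero hT j
  refine ⟨fun ⟨hPmonic, hPdeg, hPcoeff⟩ => ?_, fun hPh => hPh ▸ ⟨hmonic, hdeg, hh⟩⟩
  have hu₀ : PowerSeries.constantCoeff (PowerSeries.exp ℚ - 1) = 0 := by simp
  have hu₁ : PowerSeries.coeff 1 (PowerSeries.exp ℚ - 1) = 1 := by simp [PowerSeries.coeff_exp]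
  have hT₀ : PowerSeries.constantCoeff T = 1 := by
    have := PowerSeries.coeff_mul_pow_self_of_constantCoeff_eq_zero hu₀ T 1
    simpa [hu₁, hT] using this.symm
  set c := P.coeff 0 / j.factorial
  have hQ : P - c • h = 0 := by
    refine PowerSeries.eq_zero_of_coeff_mul_aeval_eq_zero hu₀ (by simp [hu₁])
      (f := T ^ (j + 1)) (by simp [hT₀]) ?_ fun i hi₁ hi => ?_
    · rw [coeff_sub, coeff_smul, coeff_map, coeff_hPoly_zero]
      simp [c, Nat.factorial_ne_zero]
    · have hij : i ≤ j := hi.trans <| (natDegree_sub_le _ _).trans <|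
        max_le hPdeg.le ((natDegree_smul_le _ _).trans hdeg.le)
      rw [map_sub, map_smul, mul_sub, mul_smul_comm, map_sub, map_smul, hPcoeff i hi₁ hij,
        hh i hi₁ hij, smul_zero, sub_zero]
  have hP : P = c • h := sub_eq_zero.1 hQ
  have hc : c = 1 := by
    have hPlead := hPmonic.coeff_natDegree
    rw [hPdeg, hP] at hPlead
    simpa [hdeg ▸ hmonic.coeff_natDegree] using hPlead
  rw [hP, hc, one_smul]
end

section
/- Let p be an odd prime and let m be an integer with 1 ≤ m ≤ p−2. Then the rational number B_m/m is p-integral, i.e. padicValRat p (B_m/m) ≥ 0. -/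
/-!
By von Staudt–Clausen (for even indices; odd Bernoulli numbers beyond `B_1 = -1/2` vanish), a
prime `p` divides the denominator of `B_m` only if `p - 1 ∣ m`, which `1 ≤ m ≤ p - 2` rules out.
Since moreover `p ∤ m`, the quotient `B_m / m` has a denominator prime to `p`.
-/

open Finset

theorem padicValRat.nonneg_of_not_dvd_den {p : ℕ} {q : ℚ} (h : ¬p ∣ q.den) :
    0 ≤ padicValRat p q := by
  simp [padicValRat, padicValNat.eq_zero_of_not_dvd h]

namespace Rat

variable {p : ℕ}

theorem not_dvd_den_mul (hp : p.Prime) {q r : ℚ} (hq : ¬p ∣ q.den) (hr : ¬p ∣ r.den) :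
    ¬p ∣ (q * r).den := fun h =>
  (hp.dvd_mul.mp (h.trans (mul_den_dvd q r))).elim hq hr

theorem not_dvd_den_sub (hp : p.Prime) {q r : ℚ} (hq : ¬p ∣ q.den) (hr : ¬p ∣ r.den) :
    ¬p ∣ (q - r).den := fun h =>
  (hp.dvd_mul.mp (h.trans (sub_den_dvd q r))).elim hq hr

theorem not_dvd_den_sum {ι : Type*} (hp : p.Prime) {s : Finset ι} {f : ι → ℚ}
    (hf : ∀ i ∈ s, ¬p ∣ (f i).den) : ¬p ∣ (∑ i ∈ s, f i).den := fun h => by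
  obtain ⟨i, hi, hpi⟩ :=
    (hp.prime.dvd_finsetProd_iff _).mp (h.trans (Finset.Rat.den_sum_dvd_prod_den s f))
  exact hf i hi hpi

theorem not_dvd_den_inv_natCast {n : ℕ} (hp : p.Prime) (hn : ¬p ∣ n) :
    ¬p ∣ (n : ℚ)⁻¹.den := by
  rw [inv_natCast_den]
  split_ifs
  · exact hp.not_dvd_one
  · exact hn

end Rat

open Rat in
theorem not_dvd_den_bernoulli {p m : ℕ} (hp : p.Prime) (hpm : ¬(p - 1) ∣ m) :
    ¬p ∣ (bernoulli m).den := by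
  obtain ⟨k, rfl | rfl⟩ := m.even_or_odd'
  · obtain ⟨z, hz⟩ := Bernoulli.vonStaudt_clausen k
    rw [eq_sub_of_add_eq hz.symm]
    refine not_dvd_den_sub hp (by simpa using hp.not_dvd_one) (not_dvd_den_sum hp fun q hq => ?_)
    obtain ⟨-, hq, hqk⟩ := mem_filter.mp hq
    rw [one_div]
    refine not_dvd_den_inv_natCast hp fun hpq => hpm ?_
    rwa [(Nat.prime_dvd_prime_iff_eq hp hq).mp hpq]
  · rcases k.eq_zero_or_pos with rfl | hk
    · have hden : (bernoulli 1).den = 2 := by rw [bernoulli_one]; norm_num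
      rw [mul_zero, zero_add, hden]
      intro hp2
      rw [(Nat.prime_dvd_prime_iff_eq hp Nat.prime_two).mp hp2] at hpm
      exact hpm (one_dvd _)
    · rw [bernoulli_eq_zero_of_odd (odd_two_mul_add_one k) (by omega)]
      simpa using hp.not_dvd_one

theorem bernoulli_div_self_p_integral_general (p : ℕ) [Fact p.Prime]
    (m : ℕ) (hm1 : 1 ≤ m) (hm2 : m ≤ p - 2) :
    0 ≤ padicValRat p (_root_.bernoulli m / (m : ℚ)) := by
  have hp : p.Prime := Fact.out
  have hpm : ¬(p - 1) ∣ m := Nat.not_dvd_of_pos_of_lt hm1 (by omega)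
  have hm : ¬p ∣ m := Nat.not_dvd_of_pos_of_lt hm1 (by omega)
  rw [div_eq_mul_inv]
  exact padicValRat.nonneg_of_not_dvd_den
    (Rat.not_dvd_den_mul hp (not_dvd_den_bernoulli hp hpm) (Rat.not_dvd_den_inv_natCast hp hm))

/-- For an odd prime `p` and `1 ≤ m ≤ p - 2`, the rational number `B_m / m`
is `p`-integral. -/
theorem bernoulli_div_self_p_integral (p : ℕ) [Fact p.Prime] (hp : Odd p)
    (m : ℕ) (hm1 : 1 ≤ m) (hm2 : m ≤ p - 2) :
    0 ≤ padicValRat p (_root_.bernoulli m / (m : ℚ)) :=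
  bernoulli_div_self_p_integral_general p m hm1 hm2
end

section
/- Let p be a prime and let φ be the ℤ_p-algebra endomorphism of ℤ_p[[X]] determined by substituting X ↦ (1+X)^p − 1. Then for every μ ∈ ℤ_p, the map y ↦ μ·φ(y) − y from the ideal X·ℤ_p[[X]] to itself is surjective: for every z ∈ ℤ_p[[X]] with zero constant term there exists y ∈ ℤ_p[[X]] with zero constant term such that μ·φ(y) − y = z. -/
/-!
On coefficients, `φ` is lower triangular: the `m`-th coefficient of `φ y` is
`∑_{n ≤ m} y_n · coeff_m (((1+X)^p - 1)^n)`, and since `(1+X)^p - 1 = X · (p + ⋯)` the diagonal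
entry is `p^m`. Hence `μ φ - 1` is lower triangular with diagonal entries `μ p^m - 1`, which are
units of the local ring `ℤ_p` for `m ≥ 1`, and the equation `μ φ(y) - y = z` is solved by forward
substitution, starting from `y_0 = 0`.
-/

/-- The endomorphism `φ` of `ℤ_p[[X]]` given by substituting `X ↦ (1+X)^p - 1`
(defined coefficientwise; the sum is finite since `(1+X)^p - 1` has zero constant
term, so `coeff m (((1+X)^p - 1)^n) = 0` for `n > m`). -/
noncomputable def phiFrob (p : ℕ) [Fact p.Prime] (f : PowerSeries ℤ_[p]) :
    PowerSeries ℤ_[p] :=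
  PowerSeries.mk fun m => ∑ n ∈ Finset.range (m + 1),
    PowerSeries.coeff (R := ℤ_[p]) n f *
      PowerSeries.coeff (R := ℤ_[p]) m (((1 + PowerSeries.X : PowerSeries ℤ_[p]) ^ p - 1) ^ n)

open PowerSeries Finset IsLocalRing

section ForwardSubstitution

variable {R : Type*} [CommRing R] (a : ℕ → ℕ → R) (d b : ℕ → R)

noncomputable def forwardSubst : ℕ → R
  | m => Ring.inverse (d m) * (b m - ∑ n : Fin m, a m n * forwardSubst n)

theorem sum_add_mul_forwardSubst {m : ℕ} (hd : IsUnit (d m)) :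
    ∑ n ∈ range m, a m n * forwardSubst a d b n + d m * forwardSubst a d b m = b m := by
  rw [forwardSubst, ← mul_assoc, Ring.mul_inverse_cancel _ hd, one_mul,
    Fin.sum_univ_eq_sum_range (fun n => a m n * forwardSubst a d b n)]
  ring

theorem exists_lowerTriangular_solution (hd : ∀ m, m ≠ 0 → IsUnit (d m)) (hb : b 0 = 0) :
    ∃ y : ℕ → R, y 0 = 0 ∧ ∀ m, ∑ n ∈ range m, a m n * y n + d m * y m = b m := by
  have hy0 : forwardSubst a d b 0 = 0 := by rw [forwardSubst]; simp [hb]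
  refine ⟨forwardSubst a d b, hy0, fun m => ?_⟩
  rcases eq_or_ne m 0 with rfl | hm
  · simp [hy0, hb]
  · exact sum_add_mul_forwardSubst a d b (hd m hm)

end ForwardSubstitution

theorem IsLocalRing.isUnit_mul_pow_sub_one {R : Type*} [CommRing R] [IsLocalRing R] {x : R}
    (hx : x ∈ nonunits R) (μ : R) {m : ℕ} (hm : m ≠ 0) : IsUnit (μ * x ^ m - 1) := by
  have hmem : μ * x ^ m ∈ maximalIdeal R := Ideal.mul_mem_left _ μ <|
    Ideal.pow_mem_of_mem _ ((mem_maximalIdeal x).2 hx) m (Nat.pos_of_ne_zero hm)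
  simpa using (isUnit_one_sub_self_of_mem_nonunits _ hmem).neg

theorem PowerSeries.coeff_mul_X_pow_self {R : Type*} [CommRing R] (f : R⟦X⟧) (n : ℕ) :
    coeff n ((f * X) ^ n) = constantCoeff f ^ n := by
  have h := coeff_mul_X_pow (f ^ n) n 0
  rw [zero_add] at h
  rw [mul_pow, h, coeff_zero_eq_constantCoeff, map_pow]

theorem PowerSeries.coeff_one_add_X_pow_sub_one_pow_self {R : Type*} [CommRing R] (p m : ℕ) :
    coeff m (((1 + X : R⟦X⟧) ^ p - 1) ^ m) = (p : R) ^ m := by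
  rw [← geom_sum_mul, add_sub_cancel_left, coeff_mul_X_pow_self]
  simp

theorem coeff_C_mul_phiFrob_sub_self (p : ℕ) [Fact p.Prime] (μ : ℤ_[p]) (y : ℤ_[p]⟦X⟧) (m : ℕ) :
    coeff m (C μ * phiFrob p y - y) =
      ∑ n ∈ range m, μ * coeff m (((1 + X : ℤ_[p]⟦X⟧) ^ p - 1) ^ n) * coeff n y +
        (μ * (p : ℤ_[p]) ^ m - 1) * coeff m y := by
  rw [map_sub, coeff_C_mul, phiFrob, coeff_mk, sum_range_succ,
    coeff_one_add_X_pow_sub_one_pow_self, mul_add, mul_sum, add_sub_assoc]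
  congr 1
  · exact sum_congr rfl fun n _ => by ring
  · ring

/-- For every `μ ∈ ℤ_p`, the map `y ↦ μ φ(y) - y` is surjective on the ideal
`X ℤ_p[[X]]` of power series with zero constant term. -/
theorem mu_phi_sub_one_surjective (p : ℕ) [Fact p.Prime] (μ : ℤ_[p])
    (z : PowerSeries ℤ_[p]) (hz : PowerSeries.constantCoeff (R := ℤ_[p]) z = 0) :
    ∃ y : PowerSeries ℤ_[p], PowerSeries.constantCoeff (R := ℤ_[p]) y = 0 ∧
      PowerSeries.C (R := ℤ_[p]) μ * phiFrob p y - y = z := by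
  obtain ⟨y, hy0, hy⟩ := exists_lowerTriangular_solution
    (fun m n => μ * coeff m (((1 + X : ℤ_[p]⟦X⟧) ^ p - 1) ^ n)) (fun m => μ * (p : ℤ_[p]) ^ m - 1)
    (fun m => coeff m z) (fun m hm => isUnit_mul_pow_sub_one PadicInt.p_nonunit μ hm)
    (by simpa using hz)
  refine ⟨mk y, by simpa using hy0, ?_⟩
  ext m
  rw [coeff_C_mul_phiFrob_sub_self]
  simpa using hy m
end

section
/- Let p ≥ 3 be a prime. For every real number s > 1/(p−1), the infimum over integers n ≥ 2 with B_n ≠ 0 of (padicValRat p (B_n/n!) + n·s) equals the infimum over all integers n ≥ 2 of (padicValRat p (1/(n+1) − 1/(2n)) + n·s). (This expresses the equality of the Gauss valuations of the single function t/(e^t−1) − 1 + t/2 computed in the coordinate t, whose expansion is ∑_{n≥2} B_n t^n/n!, and in the coordinate π = e^t − 1, whose expansion is ∑_{n≥2} (−1)^n (1/(n+1) − 1/(2n)) π^n.) -/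
/-!
Write `G = t/(eᵗ - 1) - 1 + t/2 = ∑ₙ Bₙ/n! · tⁿ` and `π = eᵗ - 1`. Since `t = log (1 + π)`,
`G · π = t - π + t π / 2` gives `G = ∑ₖ cₖ πᵏ` with `cₖ = (-1)ᵏ (1/(k+1) - 1/(2k))`.
Legendre's formula gives `v_p(n!) ≤ (n-1)/(p-1) ≤ (n-1) s`, so `π = ∑ tⁿ/n!` has Gauss valuation
`≥ s`, hence `πᵏ` has Gauss valuation `≥ k s`, and `πᵏ = tᵏ + O(tᵏ⁺¹)`. The matrix taking the
`π`-coefficients of `G` to its `t`-coefficients is therefore unitriangular with entries of valuation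
`≥ (k - n) s`, and so are the entries of its inverse. Hence both sets of values have the same lower
bounds.
-/

open PowerSeries Finset
open scoped Nat

/-- `m ≤ v_p(x)`, reading `v_p(0) = ∞` (whereas `padicValRat p 0 = 0`). -/
def LeVal (p : ℕ) (m : ℝ) (x : ℚ) : Prop := x ≠ 0 → m ≤ padicValRat p x

namespace LeVal

variable {p : ℕ} {a b m : ℝ} {x y : ℚ}

theorem mono (hx : LeVal p m x) (h : a ≤ m) : LeVal p a x := fun hx0 => h.trans (hx hx0)

theorem zero (p : ℕ) (m : ℝ) : LeVal p m 0 := fun h => absurd rfl h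

theorem neg (hx : LeVal p m x) : LeVal p m (-x) := fun h => by
  rw [padicValRat.neg]
  exact hx (neg_ne_zero.1 h)

theorem neg_one_pow_mul_iff (k : ℕ) : LeVal p m ((-1) ^ k * x) ↔ LeVal p m x := by
  rcases neg_one_pow_eq_or ℚ k with h | h <;> simp only [h, one_mul, neg_one_mul]
  exact ⟨fun hx => neg_neg x ▸ hx.neg, neg⟩

theorem add [Fact p.Prime] (hx : LeVal p m x) (hy : LeVal p m y) : LeVal p m (x + y) := by
  intro hxy
  rcases eq_or_ne x 0 with rfl | hx0
  · rw [zero_add] at hxy ⊢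
    exact hy hxy
  rcases eq_or_ne y 0 with rfl | hy0
  · rw [add_zero]
    exact hx hx0
  calc m ≤ min (padicValRat p x : ℝ) (padicValRat p y) := le_min (hx hx0) (hy hy0)
    _ ≤ padicValRat p (x + y) := by exact_mod_cast padicValRat.min_le_padicValRat_add hxy

theorem sub [Fact p.Prime] (hx : LeVal p m x) (hy : LeVal p m y) : LeVal p m (x - y) :=
  sub_eq_add_neg x y ▸ hx.add hy.neg

theorem sum [Fact p.Prime] {ι : Type*} {t : Finset ι} {f : ι → ℚ}
    (h : ∀ i ∈ t, LeVal p m (f i)) : LeVal p m (∑ i ∈ t, f i) :=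
  sum_induction f (LeVal p m) (fun _ _ => add) (zero p m) h

theorem mul [Fact p.Prime] (hx : LeVal p a x) (hy : LeVal p b y) : LeVal p (a + b) (x * y) :=
  fun hxy => by
    obtain ⟨hx0, hy0⟩ := mul_ne_zero_iff.1 hxy
    rw [padicValRat.mul hx0 hy0, Int.cast_add]
    exact add_le_add (hx hx0) (hy hy0)

theorem inv_natCast [Fact p.Prime] {n : ℕ} (h : (padicValNat p n : ℝ) ≤ b) :
    LeVal p (-b) (n : ℚ)⁻¹ := fun _ => by
  rw [padicValRat.inv, padicValRat.of_nat, Int.cast_neg, Int.cast_natCast]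
  exact neg_le_neg h

end LeVal

section FactorialBound

variable {p : ℕ} [Fact p.Prime] {s : ℝ}

theorem padicValNat_factorial_le_mul (hs : 1 / ((p : ℝ) - 1) ≤ s) {n : ℕ} (hn : n ≠ 0) :
    (padicValNat p n ! : ℝ) ≤ (n - 1) * s := by
  have hp : (1 : ℝ) < p := by exact_mod_cast (Fact.out : p.Prime).one_lt
  have hle : ((p : ℝ) - 1) * padicValNat p n ! ≤ n - 1 := by
    have := (Nat.cast_le (α := ℝ)).2
      (Nat.le_sub_one_of_lt (sub_one_mul_padicValNat_factorial_lt_of_ne_zero p hn))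
    push_cast [Nat.one_le_iff_ne_zero.2 hn, (Fact.out : p.Prime).one_le] at this
    exact this
  calc (padicValNat p n ! : ℝ) ≤ (n - 1) * (1 / ((p : ℝ) - 1)) := by
        rw [mul_one_div, le_div_iff₀ (by linarith)]
        linarith
    _ ≤ (n - 1) * s := by
        gcongr
        exact sub_nonneg.2 (by exact_mod_cast Nat.one_le_iff_ne_zero.2 hn)

theorem padicValNat_le_mul (hs : 1 / ((p : ℝ) - 1) ≤ s) {n : ℕ} (hn : n ≠ 0) :
    (padicValNat p n : ℝ) ≤ (n - 1) * s := by
  refine le_trans ?_ (padicValNat_factorial_le_mul hs hn)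
  exact_mod_cast (padicValNat_dvd_iff_le (Nat.factorial_ne_zero n)).1
    (pow_padicValNat_dvd.trans (Nat.dvd_factorial (Nat.pos_of_ne_zero hn) le_rfl))

end FactorialBound

section GaussValuation

/-- `a ≤ infₙ (v_p(fₙ) + n s)`, i.e. the Gauss valuation of `f` on the disc of radius `p ^ (-s)`
is at least `a`. -/
def LeGaussVal (p : ℕ) (s a : ℝ) (f : ℚ⟦X⟧) : Prop := ∀ n : ℕ, LeVal p (a - n * s) (coeff n f)

variable {p : ℕ} {s a b : ℝ} {f g : ℚ⟦X⟧}

theorem leGaussVal_one : LeGaussVal p s 0 1 := by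
  rintro (_ | n)
  · intro
    simp
  · rw [coeff_one, if_neg n.succ_ne_zero]
    exact LeVal.zero p _

theorem LeGaussVal.mul [Fact p.Prime] (hf : LeGaussVal p s a f) (hg : LeGaussVal p s b g) :
    LeGaussVal p s (a + b) (f * g) := by
  intro n
  rw [coeff_mul]
  refine LeVal.sum fun ij hij => ((hf ij.1).mul (hg ij.2)).mono (le_of_eq ?_)
  rw [← mem_antidiagonal.1 hij]
  push_cast
  ring

theorem LeGaussVal.pow [Fact p.Prime] (hf : LeGaussVal p s a f) (k : ℕ) :
    LeGaussVal p s (k * a) (f ^ k) := by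
  induction k with
  | zero => simpa using leGaussVal_one
  | succ k ih =>
    rw [pow_succ, Nat.cast_succ, add_one_mul]
    exact ih.mul hf

theorem leGaussVal_exp_sub_one [Fact p.Prime] (hs : 1 / ((p : ℝ) - 1) ≤ s) :
    LeGaussVal p s s (exp ℚ - 1) := by
  rintro (_ | n)
  · simpa using LeVal.zero p _
  · have h := LeVal.inv_natCast (p := p) (padicValNat_factorial_le_mul hs n.succ_ne_zero)
    simp only [map_sub, coeff_exp, coeff_one, n.succ_ne_zero, if_false, sub_zero,
      Algebra.algebraMap_self, RingHom.id_apply, one_div]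
    refine h.mono (le_of_eq ?_)
    push_cast
    ring

theorem leGaussVal_iff_of_coeff_eq_sum [Fact p.Prime] {π : ℚ⟦X⟧} {c : ℕ → ℚ}
    (hπ : LeGaussVal p s s π) (hdiag : ∀ k, coeff k (π ^ k) = 1)
    (hf : ∀ n, coeff n f = ∑ k ∈ range (n + 1), c k * coeff n (π ^ k)) :
    LeGaussVal p s a f ↔ ∀ k : ℕ, LeVal p (a - k * s) (c k) := by
  have hterm : ∀ {k n : ℕ}, LeVal p (a - k * s) (c k) →
      LeVal p (a - n * s) (c k * coeff n (π ^ k)) := fun hc =>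
    (hc.mul (hπ.pow _ _)).mono (le_of_eq (by ring))
  refine ⟨fun hfa k => ?_, fun hc n => hf n ▸ LeVal.sum fun k _ => hterm (hc k)⟩
  induction k using Nat.strong_induction_on with
  | _ k ih =>
    have hck : c k = coeff k f - ∑ j ∈ range k, c j * coeff k (π ^ j) := by
      rw [hf, sum_range_succ, hdiag, mul_one, add_sub_cancel_left]
    rw [hck]
    exact (hfa k).sub (LeVal.sum fun j hj => hterm (ih j (mem_range.1 hj)))

end GaussValuation

theorem PowerSeries.X_pow_succ_dvd_of_derivative {R : Type*} [CommRing R] [IsDomain R]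
    [CharZero R] {f : R⟦X⟧} {n : ℕ} (h0 : constantCoeff f = 0) (hd : X ^ n ∣ d⁄dX R f) :
    X ^ (n + 1) ∣ f := by
  rw [X_pow_dvd_iff] at hd ⊢
  rintro (_ | m) hm
  · rwa [coeff_zero_eq_constantCoeff_apply]
  · have h := hd m (by omega)
    rw [coeff_derivative] at h
    exact (mul_eq_zero.1 h).resolve_right (by exact_mod_cast m.succ_ne_zero)

theorem exists_exp_sub_one_eq_X_mul : ∃ E : ℚ⟦X⟧, exp ℚ - 1 = X * E ∧ constantCoeff E = 1 := by
  obtain ⟨E, hE⟩ := X_dvd_iff.2 (by simp : constantCoeff (exp ℚ - 1) = 0)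
  refine ⟨E, hE, ?_⟩
  have h1 := congrArg (coeff 1) hE
  rw [coeff_succ_X_mul, coeff_zero_eq_constantCoeff_apply] at h1
  simpa [coeff_exp] using h1.symm

theorem coeff_exp_sub_one_pow_self (k : ℕ) : coeff k ((exp ℚ - 1) ^ k) = 1 := by
  obtain ⟨E, hE, hE1⟩ := exists_exp_sub_one_eq_X_mul
  rw [hE, mul_pow, coeff_X_pow_mul', if_pos le_rfl, Nat.sub_self,
    coeff_zero_eq_constantCoeff_apply, map_pow, hE1, one_pow]

noncomputable def logPartialSum (N : ℕ) : ℚ⟦X⟧ :=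
  ∑ k ∈ range N, C ((-1 : ℚ) ^ k / (k + 1)) * (exp ℚ - 1) ^ (k + 1)

theorem logPartialSum_succ (N : ℕ) : logPartialSum (N + 1) =
    logPartialSum N + C ((-1 : ℚ) ^ N / (N + 1)) * (exp ℚ - 1) ^ (N + 1) :=
  sum_range_succ _ _

theorem derivative_logPartialSum (N : ℕ) :
    d⁄dX ℚ (logPartialSum N) = (∑ k ∈ range N, (-(exp ℚ - 1)) ^ k) * exp ℚ := by
  rw [logPartialSum, map_sum, sum_mul]
  refine sum_congr rfl fun k _ => ?_
  have hc : C ((-1 : ℚ) ^ k / (k + 1)) * ((k + 1 : ℕ) : ℚ⟦X⟧) = (-1) ^ k := by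
    rw [← map_natCast C, ← map_mul, Nat.cast_succ, div_mul_cancel₀ _ k.cast_add_one_ne_zero,
      map_pow, map_neg, map_one]
  rw [← smul_eq_C_mul, Derivation.map_smul, derivative_pow, map_sub, derivative_exp,
    derivative_one, sub_zero, smul_eq_C_mul, Nat.add_sub_cancel, ← mul_assoc, ← mul_assoc, hc,
    neg_pow (exp ℚ - 1)]

theorem X_pow_succ_dvd_X_sub_logPartialSum (N : ℕ) : X ^ (N + 1) ∣ X - logPartialSum N := by
  refine X_pow_succ_dvd_of_derivative (by simp [logPartialSum]) ?_
  have hgeom := geom_sum_mul_neg (-(exp ℚ - 1)) N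
  rw [sub_neg_eq_add, add_sub_cancel] at hgeom
  rw [map_sub, derivative_X, derivative_logPartialSum, hgeom, sub_sub_cancel]
  exact pow_dvd_pow_of_dvd (X_dvd_iff.2 (by simp)) N

noncomputable def bernoulliTail : ℚ⟦X⟧ := bernoulliPowerSeries ℚ - 1 + C (1 / 2) * X

theorem coeff_bernoulliTail (n : ℕ) :
    coeff n bernoulliTail = if 2 ≤ n then bernoulli n / n ! else 0 := by
  rcases n with _ | _ | n
  · simp [bernoulliTail, bernoulliPowerSeries]
  · norm_num [bernoulliTail, bernoulliPowerSeries, bernoulli_one]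
  · simp [bernoulliTail, bernoulliPowerSeries, coeff_one]

-- Without the `if`, the formula would give `1` at `k = 0`, as `1 / 0 = 0` in `ℚ`.
noncomputable def piCoeff (k : ℕ) : ℚ :=
  if 2 ≤ k then (-1) ^ k * (1 / ((k : ℚ) + 1) - 1 / (2 * (k : ℚ))) else 0

theorem piCoeff_succ (k : ℕ) :
    piCoeff (k + 1) = (-1) ^ (k + 1) / ((k + 1 : ℕ) + 1) + 1 / 2 * ((-1) ^ k / (k + 1)) := by
  rcases k with _ | k
  · norm_num [piCoeff]
  · rw [piCoeff, if_pos (by omega)]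
    push_cast
    field_simp
    ring

noncomputable def piPartialSum (N : ℕ) : ℚ⟦X⟧ :=
  ∑ k ∈ range (N + 1), C (piCoeff k) * (exp ℚ - 1) ^ k

/-- Truncation of `(log (1 + π)/π - 1 + log (1 + π)/2) · π = log (1 + π) - π + π log (1 + π)/2`. -/
theorem piPartialSum_mul_exp_sub_one (N : ℕ) :
    piPartialSum N * (exp ℚ - 1) =
      logPartialSum (N + 1) - (exp ℚ - 1) + C (1 / 2) * (exp ℚ - 1) * logPartialSum N := by
  induction N with
  | zero => simp [piPartialSum, piCoeff, logPartialSum]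
  | succ N ih =>
    rw [piPartialSum, sum_range_succ, add_mul, ← piPartialSum, ih, logPartialSum_succ (N + 1),
      logPartialSum_succ N, piCoeff_succ, map_add, map_mul]
    ring

theorem X_pow_succ_dvd_bernoulliTail_sub_piPartialSum (N : ℕ) :
    X ^ (N + 1) ∣ bernoulliTail - piPartialSum N := by
  obtain ⟨E, hE, hE1⟩ := exists_exp_sub_one_eq_X_mul
  have hmul : (bernoulliTail - piPartialSum N) * (exp ℚ - 1) =
      (X - logPartialSum (N + 1)) + C (1 / 2) * ((exp ℚ - 1) * (X - logPartialSum N)) := by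
    rw [sub_mul, piPartialSum_mul_exp_sub_one, bernoulliTail, add_mul, sub_mul,
      bernoulliPowerSeries_mul_exp_sub_one]
    ring
  have hdvd : X ^ (N + 1) * X ∣ (bernoulliTail - piPartialSum N) * E * X := by
    rw [← pow_succ, mul_assoc, mul_comm E, ← hE, hmul]
    refine dvd_add (X_pow_succ_dvd_X_sub_logPartialSum _) (Dvd.dvd.mul_left ?_ _)
    rw [pow_succ']
    exact mul_dvd_mul (X_dvd_iff.2 (by simp)) (X_pow_succ_dvd_X_sub_logPartialSum N)
  rw [mul_dvd_mul_iff_right X_ne_zero] at hdvd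
  exact (IsUnit.dvd_mul_right (isUnit_iff_constantCoeff.2 (hE1 ▸ isUnit_one))).1 hdvd

theorem coeff_bernoulliTail_eq_sum (n : ℕ) :
    coeff n bernoulliTail = ∑ k ∈ range (n + 1), piCoeff k * coeff n ((exp ℚ - 1) ^ k) := by
  have h := X_pow_dvd_iff.1 (X_pow_succ_dvd_bernoulliTail_sub_piPartialSum n) n n.lt_succ_self
  rw [map_sub, sub_eq_zero, piPartialSum, map_sum] at h
  simpa only [coeff_C_mul] using h

theorem one_div_add_one_sub_one_div_two_mul_ne_zero {k : ℕ} (hk : 2 ≤ k) :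
    1 / ((k : ℚ) + 1) - 1 / (2 * (k : ℚ)) ≠ 0 := by
  have hk' : (2 : ℚ) ≤ k := by exact_mod_cast hk
  rw [sub_ne_zero]
  intro h
  field_simp at h
  linarith

theorem leVal_piCoeff_iff {p k : ℕ} (hk : 2 ≤ k) {m : ℝ} :
    LeVal p m (piCoeff k) ↔ m ≤ padicValRat p (1 / ((k : ℚ) + 1) - 1 / (2 * (k : ℚ))) := by
  rw [piCoeff, if_pos hk, LeVal.neg_one_pow_mul_iff]
  exact ⟨fun h => h (one_div_add_one_sub_one_div_two_mul_ne_zero hk), fun h _ => h⟩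

theorem leVal_piCoeff {p : ℕ} [Fact p.Prime] {s : ℝ} (hs : 1 / ((p : ℝ) - 1) ≤ s) (k : ℕ) :
    LeVal p (-(k * s)) (piCoeff k) := by
  by_cases hk : 2 ≤ k
  · rw [piCoeff, if_pos hk, LeVal.neg_one_pow_mul_iff]
    have hk0 : k ≠ 0 := by omega
    have hcast : 1 / ((k : ℚ) + 1) - 1 / (2 * (k : ℚ)) =
        ((k + 1 : ℕ) : ℚ)⁻¹ - ((2 * k : ℕ) : ℚ)⁻¹ := by
      push_cast
      ring
    rw [hcast]
    refine (LeVal.inv_natCast ?_).sub (LeVal.inv_natCast ?_)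
    · simpa using padicValNat_le_mul hs k.succ_ne_zero
    · have h2 := padicValNat_le_mul (p := p) hs two_ne_zero
      have hvk := padicValNat_le_mul (p := p) hs hk0
      rw [padicValNat.mul two_ne_zero hk0, Nat.cast_add]
      norm_num at h2
      linarith
  · rw [piCoeff, if_neg hk]
    exact LeVal.zero p _

theorem mem_lowerBounds_bernoulli_iff {p : ℕ} {s a : ℝ} :
    a ∈ lowerBounds {x : ℝ | ∃ n : ℕ, 2 ≤ n ∧ bernoulli n ≠ 0 ∧
        x = (padicValRat p (bernoulli n / (n.factorial : ℚ)) : ℝ) + n * s} ↔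
      LeGaussVal p s a bernoulliTail := by
  refine ⟨fun h n hn0 => ?_, ?_⟩
  · rw [coeff_bernoulliTail] at hn0 ⊢
    split_ifs at hn0 ⊢ with hn
    · have := h ⟨n, hn, fun hb => hn0 (by rw [hb, zero_div]), rfl⟩
      linarith
    · exact absurd rfl hn0
  · rintro h _ ⟨n, hn, hb, rfl⟩
    have := h n
    rw [coeff_bernoulliTail, if_pos hn] at this
    linarith [this (div_ne_zero hb (by positivity))]

theorem mem_lowerBounds_piCoeff_iff {p : ℕ} {s a : ℝ} :
    a ∈ lowerBounds {x : ℝ | ∃ n : ℕ, 2 ≤ n ∧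
        x = (padicValRat p (1 / ((n : ℚ) + 1) - 1 / (2 * (n : ℚ))) : ℝ) + n * s} ↔
      ∀ k : ℕ, LeVal p (a - k * s) (piCoeff k) := by
  refine ⟨fun h k => ?_, ?_⟩
  · by_cases hk : 2 ≤ k
    · rw [leVal_piCoeff_iff hk]
      linarith [h ⟨k, hk, rfl⟩]
    · rw [piCoeff, if_neg hk]
      exact LeVal.zero p _
  · rintro h _ ⟨n, hn, rfl⟩
    linarith [(leVal_piCoeff_iff hn).1 (h n)]

theorem csInf_eq_csInf_of_lowerBounds_eq {α : Type*} [ConditionallyCompleteLattice α]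
    {S T : Set α} (hS : S.Nonempty) (hT : T.Nonempty) (hbdd : BddBelow T)
    (h : lowerBounds S = lowerBounds T) : sInf S = sInf T := by
  have hbddS : BddBelow S := by rwa [BddBelow, h]
  rw [← csSup_lowerBounds_eq_csInf hbddS hS, h, csSup_lowerBounds_eq_csInf hbdd hT]

theorem gauss_valuation_coordinate_change_general (p : ℕ) [Fact p.Prime]
    (s : ℝ) (hs : 1 / ((p : ℝ) - 1) < s) :
    sInf {x : ℝ | ∃ n : ℕ, 2 ≤ n ∧ _root_.bernoulli n ≠ 0 ∧
        x = (padicValRat p (_root_.bernoulli n / (n.factorial : ℚ)) : ℝ) + n * s} =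
      sInf {x : ℝ | ∃ n : ℕ, 2 ≤ n ∧
        x = (padicValRat p (1 / ((n : ℚ) + 1) - 1 / (2 * (n : ℚ))) : ℝ) + n * s} := by
  have hbernoulli_two : bernoulli 2 ≠ 0 := by norm_num [bernoulli_two]
  refine csInf_eq_csInf_of_lowerBounds_eq ⟨_, 2, le_rfl, hbernoulli_two, rfl⟩ ⟨_, 2, le_rfl, rfl⟩
    ⟨0, mem_lowerBounds_piCoeff_iff.2 fun k => by simpa using leVal_piCoeff hs.le k⟩
    (Set.ext fun a => ?_)
  rw [mem_lowerBounds_bernoulli_iff, mem_lowerBounds_piCoeff_iff]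
  exact leGaussVal_iff_of_coeff_eq_sum (leGaussVal_exp_sub_one hs.le) coeff_exp_sub_one_pow_self
    coeff_bernoulliTail_eq_sum

/-- For an odd prime `p` and real `s > 1/(p-1)`, the infimum over `n ≥ 2` with
`Bₙ ≠ 0` of `v_p(Bₙ/n!) + n s` equals the infimum over all `n ≥ 2` of
`v_p(1/(n+1) - 1/(2n)) + n s`: the Gauss valuation of `t/(e^t-1) - 1 + t/2` is the
same in the coordinates `t` and `π = e^t - 1`. -/
theorem gauss_valuation_coordinate_change (p : ℕ) [Fact p.Prime] (hp : 3 ≤ p)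
    (s : ℝ) (hs : 1 / ((p : ℝ) - 1) < s) :
    sInf {x : ℝ | ∃ n : ℕ, 2 ≤ n ∧ _root_.bernoulli n ≠ 0 ∧
        x = (padicValRat p (_root_.bernoulli n / (n.factorial : ℚ)) : ℝ) + n * s} =
      sInf {x : ℝ | ∃ n : ℕ, 2 ≤ n ∧
        x = (padicValRat p (1 / ((n : ℚ) + 1) - 1 / (2 * (n : ℚ))) : ℝ) + n * s} :=
  gauss_valuation_coordinate_change_general p s hs
end
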